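/- For any rooted plane tree T with n ≥ 1 edges, the number λ(T) of distinct rooted trees obtained from T by repeated tree rotation (equivalently, the period of T under rotation) is a divisor of 2n. -/

import Mathlib

/-- Rooted (ordered) plane trees: a root with a list of child subtrees. -/
inductive RTree where
  | node : List RTree → RTree

namespace RTree

mutual
/-- Number of edges of a rooted tree. -/
def edges : RTree → ℕ
  | .node cs => edgesF cs
/-- Number of edges of a forest, counting also the edges to the roots. -/
def edgesF : List RTree → ℕ
  | [] => 0
  | c :: cs => edges c + 1 + edgesF cs
end

/-- Tree rotation `ρ(1 u 0 v) = u 1 v 0`: the leftmost child of the root becomes the new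
root, and the old root (with its remaining children) is appended as its last child. -/
def rho : RTree → RTree
  | .node [] => .node []
  | .node (.node cs :: rest) => .node (cs ++ [.node rest])

mutual
/-- The list of vertices of a rooted tree, encoded as addresses (paths of child indices). -/
def addrs : RTree → List (List ℕ)
  | .node cs => [] :: addrsF 0 cs
def addrsF : ℕ → List RTree → List (List ℕ)
  | _, [] => []
  | i, c :: cs => (addrs c).map (i :: ·) ++ addrsF (i + 1) cs
end

/-- Length of the longest common prefix of two addresses. -/
def lcp : List ℕ → List ℕ → ℕ
  | a :: p, b :: q => if a = b then 1 + lcp p q else 0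
  | _, _ => 0

/-- Graph distance between two vertices, given by their addresses. -/
def adist (p q : List ℕ) : ℕ := p.length + q.length - 2 * lcp p q

/-- The potential of the vertex `p`: the sum of distances to all vertices of `t`. -/
def potential (t : RTree) (p : List ℕ) : ℕ := ((addrs t).map (adist p)).sum

/-- The potential `φ(t)` of the tree: the minimum vertex potential. -/
noncomputable def phiMin (t : RTree) : ℕ := sInf {m | ∃ p ∈ addrs t, potential t p = m}

/-- A centroid: a vertex of minimum potential. -/
def IsCentroid (t : RTree) (p : List ℕ) : Prop :=
  p ∈ addrs t ∧ potential t p = phiMin t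

/-- `λ(t)`: the rotation period of the rooted tree `t`, i.e. the number of distinct rooted
trees obtained from `t` by repeated rotation. -/
noncomputable def lam (t : RTree) : ℕ := sInf {i | 0 < i ∧ rho^[i] t = t}

end RTree

/-!
Rotating `node (node es :: rest)` makes `es` the children of the root, followed by the old root
with children `rest`. Inductively, `2 * edgesF es` further rotations move `es` behind the old
root, and one more rotation makes the old root the root again, now with `node es` appended to
its children. So `2 * edgesF cs` rotations move the whole child list `cs` of the root to the
back, and `ρ^[2n]` fixes every tree with `n` edges.
-/

namespace RTree

theorem rho_node_cons (cs rest : List RTree) :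
    rho (node (node cs :: rest)) = node (cs ++ [node rest]) := rfl

theorem edgesF_node_cons (cs rest : List RTree) :
    edgesF (node cs :: rest) = edgesF cs + 1 + edgesF rest := rfl

theorem rho_iterate_two_mul_edgesF (cs pre : List RTree) :
    rho^[2 * edgesF cs] (node (cs ++ pre)) = node (pre ++ cs) := by
  match cs with
  | [] => simp [edgesF]
  | node es :: rest =>
    have hes := rho_iterate_two_mul_edgesF es [node (rest ++ pre)]
    have hrest := rho_iterate_two_mul_edgesF rest (pre ++ [node es])
    have hsplit : 2 * edgesF (node es :: rest) = 2 * edgesF rest + 1 + 2 * edgesF es + 1 := by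
      rw [edgesF_node_cons]; ring
    calc rho^[2 * edgesF (node es :: rest)] (node (node es :: rest ++ pre))
      _ = rho^[2 * edgesF rest]
            (rho (rho^[2 * edgesF es] (rho (node (node es :: (rest ++ pre)))))) := by
          rw [hsplit, Function.iterate_succ_apply, Function.iterate_add_apply,
            Function.iterate_succ_apply, List.cons_append]
      _ = node (pre ++ node es :: rest) := by
          rw [rho_node_cons, hes, List.singleton_append, rho_node_cons, List.append_assoc, hrest,
            List.append_assoc, List.singleton_append]
termination_by edgesF cs
decreasing_by all_goals rw [edgesF_node_cons]; omega

theorem isPeriodicPt_rho_two_mul_edges (t : RTree) :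
    Function.IsPeriodicPt rho (2 * edges t) t := by
  obtain ⟨cs⟩ := t
  have h := rho_iterate_two_mul_edgesF cs []
  rwa [List.append_nil, List.nil_append] at h

theorem lam_eq_minimalPeriod (t : RTree) : lam t = Function.minimalPeriod rho t :=
  Function.minimalPeriod_eq_sInf_n_pos_IsPeriodicPt.symm

end RTree

open RTree in
/-- For any rooted plane tree with `n ≥ 1` edges, the rotation period
`λ(T)` divides `2n`. -/
theorem lam_dvd_two_mul (n : ℕ) (hn : 1 ≤ n) (t : RTree) (ht : t.edges = n) :
    lam t ∣ 2 * n := by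
  rw [lam_eq_minimalPeriod, ← ht]
  exact (isPeriodicPt_rho_two_mul_edges t).minimalPeriod_dvd
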